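/- If every vertex of the doubly directed graph G(F) of a face F of ASM_n has even degree, then for each vertex (ASM) A of F there is a unique vertex B of F such that no proper face of F contains both A and B; B is obtained by reversing all arcs of the simple flow grid of A that correspond to edges of G(F). If G(F) has a vertex of odd degree, then no two vertices of F are estranged in F. -/

import Mathlib

open scoped BigOperators
open scoped Classical

namespace ASMPaper

variable {n : ℕ}

/-- Partial row sum `W_{ij} = ∑_{j' ≤ j} a_{i j'}`. -/
def rowPartial (A : Matrix (Fin n) (Fin n) ℝ) (i j : Fin n) : ℝ :=
  ∑ j' ∈ Finset.univ.filter (fun j' : Fin n => j' ≤ j), A i j'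

/-- Partial column sum `N_{ij} = ∑_{i' ≤ i} a_{i' j}`. -/
def colPartial (A : Matrix (Fin n) (Fin n) ℝ) (i j : Fin n) : ℝ :=
  ∑ i' ∈ Finset.univ.filter (fun i' : Fin n => i' ≤ i), A i' j

/-- An alternating sign matrix: entries in {0,1,-1}, rows and columns sum to 1,
nonzero entries alternating in sign along rows and columns (equivalently, all
partial row and column sums lie in {0,1}). -/
def IsASM (A : Matrix (Fin n) (Fin n) ℝ) : Prop :=
  (∀ i j, A i j = 0 ∨ A i j = 1 ∨ A i j = -1) ∧
  (∀ i j, rowPartial A i j = 0 ∨ rowPartial A i j = 1) ∧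
  (∀ i j, colPartial A i j = 0 ∨ colPartial A i j = 1) ∧
  (∀ i, ∑ j, A i j = 1) ∧
  (∀ j, ∑ i, A i j = 1)

/-- The ASM polytope: convex hull of the `n × n` alternating sign matrices. -/
def ASMPolytope (n : ℕ) : Set (Matrix (Fin n) (Fin n) ℝ) :=
  convexHull ℝ {A : Matrix (Fin n) (Fin n) ℝ | IsASM A}

/-- A face of a convex set: a convex extreme subset. -/
def IsFaceOf (F P : Set (Matrix (Fin n) (Fin n) ℝ)) : Prop :=
  IsExtreme ℝ P F ∧ Convex ℝ F

/-- A facet: a nonempty face of dimension one less. -/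
def IsFacetOf (G F : Set (Matrix (Fin n) (Fin n) ℝ)) : Prop :=
  IsFaceOf G F ∧ G.Nonempty ∧
    Module.finrank ℝ (vectorSpan ℝ G) + 1 = Module.finrank ℝ (vectorSpan ℝ F)

/-- The ASMs (vertices) belonging to a face `F`. -/
def faceASMs (F : Set (Matrix (Fin n) (Fin n) ℝ)) : Set (Matrix (Fin n) (Fin n) ℝ) :=
  {A | A ∈ F ∧ IsASM A}

/-- `A` and `B` are estranged in `F` if no proper face of `F` contains both. -/
def Estranged (F : Set (Matrix (Fin n) (Fin n) ℝ)) (A B : Matrix (Fin n) (Fin n) ℝ) : Prop :=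
  ∀ F', IsFaceOf F' F → F' ≠ F → ¬(A ∈ F' ∧ B ∈ F')

/-- The doubly directed graph of a set `X` of ASMs: grid vertices `(i,j)`, with an
(undirected) edge between orthogonally adjacent grid vertices whenever the
corresponding grid edge receives both orientations among the simple flow grids of
members of `X` (the orientation of a grid edge in the simple flow grid of `A` is
determined by the relevant partial sum of `A`). -/
def ddGraph (X : Set (Matrix (Fin n) (Fin n) ℝ)) : SimpleGraph (Fin n × Fin n) where
  Adj v w :=
    (v.1 = w.1 ∧ ((v.2 : ℕ) + 1 = (w.2 : ℕ) ∨ (w.2 : ℕ) + 1 = (v.2 : ℕ)) ∧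
      ∃ A ∈ X, ∃ B ∈ X, rowPartial A v.1 (min v.2 w.2) ≠ rowPartial B v.1 (min v.2 w.2)) ∨
    (v.2 = w.2 ∧ ((v.1 : ℕ) + 1 = (w.1 : ℕ) ∨ (w.1 : ℕ) + 1 = (v.1 : ℕ)) ∧
      ∃ A ∈ X, ∃ B ∈ X, colPartial A (min v.1 w.1) v.2 ≠ colPartial B (min v.1 w.1) v.2)
  symm := by
    constructor
    rintro v w (⟨h1, h2, h3⟩ | ⟨h1, h2, h3⟩)
    · exact Or.inl ⟨h1.symm, h2.symm, by rw [min_comm, ← h1]; exact h3⟩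
    · exact Or.inr ⟨h1.symm, h2.symm, by rw [min_comm, ← h1]; exact h3⟩
  loopless := by
    constructor
    rintro v (⟨-, h2, -⟩ | ⟨-, h2, -⟩) <;> rcases h2 with h | h <;> omega

/-- Degree of a grid vertex in the doubly directed graph. -/
noncomputable def ddDegree (X : Set (Matrix (Fin n) (Fin n) ℝ)) (v : Fin n × Fin n) : ℕ :=
  ((ddGraph X).neighborSet v).ncard

/-- The (non-isolated) vertices of the doubly directed graph. -/
def ddSupport (X : Set (Matrix (Fin n) (Fin n) ℝ)) : Set (Fin n × Fin n) :=
  {v | ∃ w, (ddGraph X).Adj v w}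

/-- The doubly directed graph is connected (on its support). -/
def DDConnected (X : Set (Matrix (Fin n) (Fin n) ℝ)) : Prop :=
  ∀ v ∈ ddSupport X, ∀ w ∈ ddSupport X, (ddGraph X).Reachable v w

/-!
Encode a matrix by its flows, the partial row and column sums it places on the horizontal and
vertical edges of the grid. The ASM polytope consists of the matrices whose flows lie in `[0, 1]`
and whose lines sum to `1`: by Krein–Milman it suffices that extreme points are integral, and a
point with a fractional edge carries a nonzero circulation on its fractional edges (they outnumber
the grid vertices they meet), along which it can be moved both ways. Hence an ASM lies in a face
`F` as soon as its flows agree with those of the vertices of `F` on every edge of `G(F)`, i.e.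
every edge on which these flows are not constant.

If `A` and `B` are estranged, they differ on every edge `e` of `G(F)`, for the points of `F` with
the flow of `A` on `e` form a proper face. So `B` is `A` reversed along `G(F)`, and the edges of
`G(F)` at a grid vertex are those where `A` and `B` differ, an even number by conservation.
Conversely, if all degrees are even the reversed flow is again conservative, hence the flow of an
ASM in `F`; and `A` plus its reversal is the same matrix for every vertex of `F`, so a face through
`A` and its reversal contains every vertex of `F`.
-/

open Filter Topology

section ConvexFaces

variable {E : Type*} [AddCommGroup E] [Module ℝ E]

theorem _root_.IsExtreme.mem_of_add_smul_sub_mem {P F : Set E} (hF : IsExtreme ℝ P F)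
    {x y : E} (hx : x ∈ F) (hy : y ∈ P) {t : ℝ} (ht : 0 < t) (hxy : x + t • (x - y) ∈ P) :
    y ∈ F := by
  refine hF.left_mem_of_mem_openSegment hy hxy hx
    ⟨t / (1 + t), 1 / (1 + t), by positivity, by positivity, ?_, ?_⟩
  · rw [← add_div, add_comm, div_self (by positivity)]
  · match_scalars <;> field_simp
    ring

theorem _root_.IsExtreme.subset_convexHull_inter {S F : Set E}
    (hF : IsExtreme ℝ (convexHull ℝ S) F) : F ⊆ convexHull ℝ (S ∩ F) := by
  intro x hx
  have hout : convexHull ℝ (S \ F) ⊆ convexHull ℝ S \ F :=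
    convexHull_min (fun y hy => ⟨subset_convexHull ℝ S hy.1, hy.2⟩)
      (hF.convex_sdiff (convex_convexHull ℝ S))
  have hxS := hF.subset hx
  rcases (S \ F).eq_empty_or_nonempty with h | h
  · rwa [Set.inter_eq_left.2 (Set.sdiff_eq_empty.1 h)]
  rcases (S ∩ F).eq_empty_or_nonempty with h' | h'
  · have hSF : S ⊆ S \ F := fun y hy =>
      ⟨hy, fun hyF => Set.eq_empty_iff_forall_notMem.1 h' y ⟨hy, hyF⟩⟩
    exact absurd hx (hout (convexHull_mono hSF hxS)).2
  rw [← Set.inter_union_sdiff S F, convexHull_union h' h, mem_convexJoin] at hxS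
  obtain ⟨a, ha, b, hb, hab⟩ := hxS
  rw [← insert_endpoints_openSegment] at hab
  rcases hab with rfl | rfl | hab
  · exact ha
  · exact absurd hx (hout hb).2
  · exact absurd (hF.right_mem_of_mem_openSegment (convexHull_mono Set.inter_subset_left ha)
      (hout hb).1 hx hab) (hout hb).2

theorem _root_.isExtreme_setOf_eq_of_forall_le {K : Set E} (l : E →ₗ[ℝ] ℝ) {c : ℝ}
    (hl : ∀ x ∈ K, l x ≤ c) : IsExtreme ℝ K {x ∈ K | l x = c} := by
  refine ⟨Set.sep_subset _ _, ?_⟩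
  rintro x hx y hy z ⟨-, hz⟩ ⟨a, b, ha, hb, hab, rfl⟩
  rw [map_add, map_smul, map_smul, smul_eq_mul, smul_eq_mul] at hz
  have hsum : a * (c - l x) + b * (c - l y) = 0 := by linear_combination c * hab - hz
  have hxc : a * (c - l x) = 0 := by
    linarith [mul_nonneg ha.le (sub_nonneg.2 (hl x hx)),
      mul_nonneg hb.le (sub_nonneg.2 (hl y hy))]
  exact ⟨hx, (sub_eq_zero.1 ((mul_eq_zero.1 hxc).resolve_left ha.ne')).symm⟩

end ConvexFaces

lemma eq_one_sub_of_ne {x y : ℝ} (hx : x = 0 ∨ x = 1) (hy : y = 0 ∨ y = 1) (hxy : x ≠ y) :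
    x = 1 - y := by
  rcases hx with rfl | rfl <;> rcases hy with rfl | rfl <;> simp_all

lemma eq_zero_or_one_of_mem_Icc_of_notMem_Ioo {x : ℝ} (h : x ∈ Set.Icc 0 1)
    (h' : x ∉ Set.Ioo 0 1) : x = 0 ∨ x = 1 := by
  by_contra! hx
  exact h' ⟨lt_of_le_of_ne h.1 (Ne.symm hx.1), lt_of_le_of_ne h.2 hx.2⟩

lemma notMem_Ioo_of_add_eq_add {a b c d : ℝ} (h : a + b = c + d) (hb : b = 0 ∨ b = 1)
    (hc : c = 0 ∨ c = 1) (hd : d = 0 ∨ d = 1) : a ∉ Set.Ioo 0 1 := by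
  rintro ⟨h0, h1⟩
  rcases hb with rfl | rfl <;> rcases hc with rfl | rfl <;> rcases hd with rfl | rfl <;> linarith

lemma even_of_conservation {a b c d a' b' c' d' : ℝ} (h : b - a = d - c) (h' : b' - a' = d' - c')
    (ha : a = 0 ∨ a = 1) (hb : b = 0 ∨ b = 1) (hc : c = 0 ∨ c = 1) (hd : d = 0 ∨ d = 1)
    (ha' : a' = 0 ∨ a' = 1) (hb' : b' = 0 ∨ b' = 1) (hc' : c' = 0 ∨ c' = 1)
    (hd' : d' = 0 ∨ d' = 1) :
    Even ((if a ≠ a' then 1 else 0) + (if b ≠ b' then 1 else 0) + (if c ≠ c' then 1 else 0) +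
      (if d ≠ d' then 1 else 0)) := by
  rcases ha with rfl | rfl <;> rcases hb with rfl | rfl <;> rcases hc with rfl | rfl <;>
    rcases hd with rfl | rfl <;> norm_num at h <;>
    rcases ha' with rfl | rfl <;> rcases hb' with rfl | rfl <;> rcases hc' with rfl | rfl <;>
    rcases hd' with rfl | rfl <;> revert h' <;> norm_num

/-- `Sum.inl (i, k)` is the horizontal edge of row `i` entering column `k` (`k = 0` and
`k = n` are the left and right boundary), `Sum.inr (k, j)` the vertical edge of column `j`
entering row `k`; a matrix sends flow `∑_{j < k} a_{ij}`, resp. `∑_{i < k} a_{ij}`, along it. -/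
abbrev Edge (n : ℕ) := (Fin n × Fin (n + 1)) ⊕ (Fin (n + 1) × Fin n)

def prefixSum (f : Fin n → ℝ) (k : Fin (n + 1)) : ℝ :=
  ∑ j with j.castSucc < k, f j

@[simp]
lemma prefixSum_zero (f : Fin n → ℝ) : prefixSum f 0 = 0 := by
  simp [prefixSum]

lemma prefixSum_succ (f : Fin n → ℝ) (j : Fin n) :
    prefixSum f j.succ = prefixSum f j.castSucc + f j := by
  have : Finset.univ.filter (fun j' : Fin n => j'.castSucc < j.succ) =
      insert j (Finset.univ.filter fun j' : Fin n => j'.castSucc < j.castSucc) := by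
    ext j'
    simp [Fin.castSucc_lt_succ_iff, le_iff_lt_or_eq, or_comm]
  rw [prefixSum, prefixSum, this, Finset.sum_insert (by simp), add_comm]

@[simp]
lemma prefixSum_last (f : Fin n → ℝ) : prefixSum f (Fin.last n) = ∑ j, f j := by
  simp [prefixSum, Fin.castSucc_lt_last]

lemma prefixSum_eq_of_sub {f : Fin n → ℝ} {g : Fin (n + 1) → ℝ} (h0 : g 0 = 0)
    (hf : ∀ j, f j = g j.succ - g j.castSucc) : prefixSum f = g := by
  funext k
  induction k using Fin.induction with
  | zero => simp [h0]
  | succ j ih => rw [prefixSum_succ, ih, hf]; ring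

def flow : Matrix (Fin n) (Fin n) ℝ →ₗ[ℝ] Edge n → ℝ where
  toFun A :=
    Sum.elim (fun e => prefixSum (A e.1) e.2) (fun e => prefixSum (fun i => A i e.2) e.1)
  map_add' A B := by ext (e | e) <;> simp [prefixSum, Finset.sum_add_distrib]
  map_smul' c A := by ext (e | e) <;> simp [prefixSum, Finset.mul_sum]

@[simp]
lemma flow_inl (A : Matrix (Fin n) (Fin n) ℝ) (i : Fin n) (k : Fin (n + 1)) :
    flow A (.inl (i, k)) = prefixSum (A i) k := rfl

@[simp]
lemma flow_inr (A : Matrix (Fin n) (Fin n) ℝ) (k : Fin (n + 1)) (j : Fin n) :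
    flow A (.inr (k, j)) = prefixSum (fun i => A i j) k := rfl

section Vertex

variable (v : Fin n × Fin n)

def west : Edge n := .inl (v.1, v.2.castSucc)

def east : Edge n := .inl (v.1, v.2.succ)

def north : Edge n := .inr (v.1.castSucc, v.2)

def south : Edge n := .inr (v.1.succ, v.2)

def incident : Finset (Edge n) := {west v, east v, north v, south v}

lemma sum_incident {M : Type*} [AddCommMonoid M] (g : Edge n → M) :
    ∑ e ∈ incident v, g e = g (west v) + g (east v) + g (north v) + g (south v) := by
  simp [incident, west, east, north, south, Finset.sum_insert, Fin.ext_iff, add_assoc]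

end Vertex

lemma flow_east (A : Matrix (Fin n) (Fin n) ℝ) (i j : Fin n) :
    flow A (east (i, j)) = rowPartial A i j := by
  simp [east, prefixSum, rowPartial, Fin.castSucc_lt_succ_iff]

lemma flow_south (A : Matrix (Fin n) (Fin n) ℝ) (i j : Fin n) :
    flow A (south (i, j)) = colPartial A i j := by
  simp [south, prefixSum, colPartial, Fin.castSucc_lt_succ_iff]

lemma flow_east_sub_west (A : Matrix (Fin n) (Fin n) ℝ) (v : Fin n × Fin n) :
    flow A (east v) - flow A (west v) = A v.1 v.2 := by
  simp [east, west, prefixSum_succ]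

lemma flow_south_sub_north (A : Matrix (Fin n) (Fin n) ℝ) (v : Fin n × Fin n) :
    flow A (south v) - flow A (north v) = A v.1 v.2 := by
  simp [south, north, prefixSum_succ]

def divergence : (Edge n → ℝ) →ₗ[ℝ] Fin n × Fin n → ℝ where
  toFun val v := val (east v) - val (west v) - (val (south v) - val (north v))
  map_add' _ _ := by ext; simp only [Pi.add_apply]; ring
  map_smul' _ _ := by ext; simp only [Pi.smul_apply, smul_eq_mul, RingHom.id_apply]; ring

lemma divergence_apply (val : Edge n → ℝ) (v : Fin n × Fin n) :
    divergence val v = val (east v) - val (west v) - (val (south v) - val (north v)) := rfl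

lemma divergence_flow (A : Matrix (Fin n) (Fin n) ℝ) (v : Fin n × Fin n) :
    divergence (flow A) v = 0 := by
  rw [divergence_apply, flow_east_sub_west, flow_south_sub_north, sub_self]

lemma divergence_congr {val val' : Edge n → ℝ} {v : Fin n × Fin n}
    (h : ∀ e ∈ incident v, val e = val' e) : divergence val v = divergence val' v := by
  simp only [incident, Finset.mem_insert, Finset.mem_singleton, forall_eq_or_imp, forall_eq] at h
  simp [divergence_apply, h]

def ofFlow (val : Edge n → ℝ) : Matrix (Fin n) (Fin n) ℝ :=
  Matrix.of fun i j => val (east (i, j)) - val (west (i, j))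

lemma ofFlow_flow (A : Matrix (Fin n) (Fin n) ℝ) : ofFlow (flow A) = A := by
  ext i j
  exact flow_east_sub_west A (i, j)

lemma flow_injective : Function.Injective (flow (n := n)) :=
  Function.LeftInverse.injective ofFlow_flow

lemma flow_ofFlow {val : Edge n → ℝ} (hrow : ∀ i, val (.inl (i, 0)) = 0)
    (hcol : ∀ j, val (.inr (0, j)) = 0) (hdiv : ∀ v, divergence val v = 0) :
    flow (ofFlow val) = val := by
  ext (⟨i, k⟩ | ⟨k, j⟩)
  · refine congrFun (prefixSum_eq_of_sub (g := fun k => val (.inl (i, k))) (hrow i)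
      fun j => ?_) k
    simp [ofFlow, east, west]
  · refine congrFun (prefixSum_eq_of_sub (g := fun k => val (.inr (k, j))) (hcol j)
      fun i => ?_) k
    have := hdiv (i, j)
    simp only [divergence_apply, east, west, south, north] at this
    simp only [ofFlow, Matrix.of_apply, east, west]
    linarith

def IsInterior : Edge n → Prop
  | .inl (_, k) => k ≠ 0 ∧ k ≠ Fin.last n
  | .inr (k, _) => k ≠ 0 ∧ k ≠ Fin.last n

section Handshake

variable {M : Type*} [AddCommMonoid M] {g : Edge n → M}

lemma sum_west (hg : ∀ i, g (.inl (i, Fin.last n)) = 0) :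
    ∑ v, g (west v) = ∑ h, g (.inl h) := by
  simp [west, Fintype.sum_prod_type, Fin.sum_univ_castSucc, hg]

lemma sum_east (hg : ∀ i, g (.inl (i, 0)) = 0) : ∑ v, g (east v) = ∑ h, g (.inl h) := by
  simp [east, Fintype.sum_prod_type, Fin.sum_univ_succ, hg]

lemma sum_north (hg : ∀ j, g (.inr (Fin.last n, j)) = 0) :
    ∑ v, g (north v) = ∑ h, g (.inr h) := by
  simp [north, Fintype.sum_prod_type, Fin.sum_univ_castSucc, hg]

lemma sum_south (hg : ∀ j, g (.inr (0, j)) = 0) : ∑ v, g (south v) = ∑ h, g (.inr h) := by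
  simp [south, Fintype.sum_prod_type, Fin.sum_univ_succ, hg]

lemma sum_sum_incident (hg : ∀ e, ¬ IsInterior e → g e = 0) :
    ∑ v, ∑ e ∈ incident v, g e = 2 • ∑ e, g e := by
  simp only [sum_incident, Finset.sum_add_distrib]
  rw [sum_west fun _ => hg _ (by simp [IsInterior]),
    sum_east fun _ => hg _ (by simp [IsInterior]),
    sum_north fun _ => hg _ (by simp [IsInterior]),
    sum_south fun _ => hg _ (by simp [IsInterior]), Fintype.sum_sum_type, two_nsmul]
  abel

end Handshake

lemma sum_divergence {val : Edge n → ℝ} (hval : ∀ e, ¬ IsInterior e → val e = 0) :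
    ∑ v, divergence val v = 0 := by
  simp only [divergence_apply, Finset.sum_sub_distrib]
  rw [sum_west fun _ => hval _ (by simp [IsInterior]),
    sum_east fun _ => hval _ (by simp [IsInterior]),
    sum_north fun _ => hval _ (by simp [IsInterior]),
    sum_south fun _ => hval _ (by simp [IsInterior])]
  ring

lemma flow_inl_last (A : Matrix (Fin n) (Fin n) ℝ) (i : Fin n) :
    flow A (.inl (i, Fin.last n)) = ∑ j, A i j :=
  prefixSum_last _

lemma flow_inr_last (A : Matrix (Fin n) (Fin n) ℝ) (j : Fin n) :
    flow A (.inr (Fin.last n, j)) = ∑ i, A i j :=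
  prefixSum_last _

lemma isASM_iff {A : Matrix (Fin n) (Fin n) ℝ} : IsASM A ↔
    (∀ e, flow A e = 0 ∨ flow A e = 1) ∧ (∀ i, ∑ j, A i j = 1) ∧ ∀ j, ∑ i, A i j = 1 := by
  constructor
  · rintro ⟨-, hrow, hcol, hr, hc⟩
    refine ⟨?_, hr, hc⟩
    rintro (⟨i, k⟩ | ⟨k, j⟩) <;> rcases Fin.eq_zero_or_eq_succ k with rfl | ⟨l, rfl⟩
    · simp
    · exact flow_east A i l ▸ hrow i l
    · simp
    · exact flow_south A l j ▸ hcol l j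
  · rintro ⟨h01, hr, hc⟩
    refine ⟨fun i j => ?_, fun i j => flow_east A i j ▸ h01 _,
      fun i j => flow_south A i j ▸ h01 _, hr, hc⟩
    rw [← flow_east_sub_west A (i, j)]
    rcases h01 (east (i, j)) with h | h <;> rcases h01 (west (i, j)) with h' | h' <;> simp [h, h']

lemma IsASM.flow_eq_zero_or_one {A : Matrix (Fin n) (Fin n) ℝ} (hA : IsASM A) (e : Edge n) :
    flow A e = 0 ∨ flow A e = 1 :=
  (isASM_iff.1 hA).1 e

lemma finite_setOf_isASM : {A : Matrix (Fin n) (Fin n) ℝ | IsASM A}.Finite :=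
  (Set.Finite.pi fun _ => Set.Finite.pi fun _ => Set.toFinite ({0, 1, -1} : Set ℝ)).subset
    fun A hA i _ j _ => by rcases hA.1 i j with h | h | h <;> simp [h]

section Polytope

instance {m k : Type*} [Fintype m] [Fintype k] : LocallyConvexSpace ℝ (Matrix m k ℝ) :=
  inferInstanceAs (LocallyConvexSpace ℝ (m → k → ℝ))

def flowPolytope (n : ℕ) : Set (Matrix (Fin n) (Fin n) ℝ) :=
  {X | (∀ e, flow X e ∈ Set.Icc 0 1) ∧ (∀ i, ∑ j, X i j = 1) ∧ ∀ j, ∑ i, X i j = 1}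

lemma IsASM.mem_flowPolytope {A : Matrix (Fin n) (Fin n) ℝ} (hA : IsASM A) :
    A ∈ flowPolytope n := by
  obtain ⟨h01, hr, hc⟩ := isASM_iff.1 hA
  exact ⟨fun e => by rcases h01 e with h | h <;> simp [h], hr, hc⟩

lemma convex_flowPolytope : Convex ℝ (flowPolytope n) := by
  rintro X ⟨hX, hXr, hXc⟩ Y ⟨hY, hYr, hYc⟩ a b ha hb hab
  refine ⟨fun e => ?_, fun i => ?_, fun j => ?_⟩
  · simpa using convex_Icc (0 : ℝ) 1 (hX e) (hY e) ha hb hab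
  · simp [Finset.sum_add_distrib, ← Finset.mul_sum, hXr, hYr, hab]
  · simp [Finset.sum_add_distrib, ← Finset.mul_sum, hXc, hYc, hab]

lemma ASMPolytope_subset_flowPolytope : ASMPolytope n ⊆ flowPolytope n :=
  convexHull_min (fun _ hA => IsASM.mem_flowPolytope hA) convex_flowPolytope

lemma isCompact_flowPolytope : IsCompact (flowPolytope n) := by
  have hflow (e : Edge n) : Continuous fun X : Matrix (Fin n) (Fin n) ℝ => flow X e :=
    (continuous_apply e).comp (LinearMap.continuous_of_finiteDimensional flow)
  have hclosed : IsClosed (flowPolytope n) := by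
    have hrow (i : Fin n) : Continuous fun X : Matrix (Fin n) (Fin n) ℝ => ∑ j, X i j := by
      fun_prop
    have hcol (j : Fin n) : Continuous fun X : Matrix (Fin n) (Fin n) ℝ => ∑ i, X i j := by
      fun_prop
    simp only [flowPolytope, Set.ofPred_and, Set.ofPred_forall]
    exact (isClosed_iInter fun e => isClosed_Icc.preimage (hflow e)).inter
      ((isClosed_iInter fun i => isClosed_eq (hrow i) continuous_const).inter
      (isClosed_iInter fun j => isClosed_eq (hcol j) continuous_const))
  have hbox : IsCompact
      (Set.univ.pi fun _ : Fin n => Set.univ.pi fun _ : Fin n => Set.Icc (-1 : ℝ) 1) :=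
    isCompact_univ_pi fun _ => isCompact_univ_pi fun _ => isCompact_Icc
  refine hbox.of_isClosed_subset hclosed fun X hX i _ j _ => ?_
  have hw := hX.1 (west (i, j))
  have he := hX.1 (east (i, j))
  rw [← flow_east_sub_west X (i, j)]
  constructor <;> linarith [hw.1, hw.2, he.1, he.2]

lemma eventually_add_smul_mem_flowPolytope {X Y : Matrix (Fin n) (Fin n) ℝ}
    (hX : X ∈ flowPolytope n) (hY : ∀ e, flow X e ∉ Set.Ioo 0 1 → flow Y e = 0) :
    ∀ᶠ t in 𝓝 (0 : ℝ), X + t • Y ∈ flowPolytope n := by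
  have hr (i : Fin n) : ∑ j, Y i j = 0 := by
    rw [← flow_inl_last]
    exact hY _ (by simp [hX.2.1 i])
  have hc (j : Fin n) : ∑ i, Y i j = 0 := by
    rw [← flow_inr_last]
    exact hY _ (by simp [hX.2.2 j])
  have hsum : ∀ t : ℝ, (∀ i, ∑ j, (X + t • Y) i j = 1) ∧ ∀ j, ∑ i, (X + t • Y) i j = 1 :=
    fun t => ⟨fun i => by simp [Finset.sum_add_distrib, ← Finset.mul_sum, hX.2.1 i, hr i],
      fun j => by simp [Finset.sum_add_distrib, ← Finset.mul_sum, hX.2.2 j, hc j]⟩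
  refine (Filter.eventually_all.2 fun e => ?_).mono fun t ht => ⟨ht, hsum t⟩
  simp only [map_add, map_smul, Pi.add_apply, Pi.smul_apply, smul_eq_mul]
  by_cases he : flow X e ∈ Set.Ioo 0 1
  · have hcont : ContinuousAt (fun t : ℝ => flow X e + t * flow Y e) 0 := by fun_prop
    exact (hcont.eventually_mem (isOpen_Ioo.mem_nhds (by simpa using he))).mono
      fun t ht => Set.Ioo_subset_Icc_self ht
  · exact Eventually.of_forall fun t => by simpa [hY e he] using hX.1 e

end Polytope

section Integrality

variable {X : Matrix (Fin n) (Fin n) ℝ}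

lemma isInterior_of_flow_mem_Ioo (hX : X ∈ flowPolytope n) {e : Edge n}
    (he : flow X e ∈ Set.Ioo 0 1) : IsInterior e := by
  rcases e with ⟨i, k⟩ | ⟨k, j⟩ <;> refine ⟨?_, ?_⟩ <;> rintro rfl
  · simp at he
  · simp [hX.2.1 i] at he
  · simp at he
  · simp [hX.2.2 j] at he

/-- No grid vertex meets exactly one fractional edge: by conservation, the flow on the fourth
edge is an integer combination of the flows on the other three. -/
lemma two_le_card_incident_fractional (hX : X ∈ flowPolytope n) {v : Fin n × Fin n}
    (hv : ∃ e ∈ incident v, flow X e ∈ Set.Ioo 0 1) :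
    2 ≤ ((incident v).filter fun e => flow X e ∈ Set.Ioo 0 1).card := by
  obtain ⟨e₀, he₀, hfrac⟩ := hv
  by_contra! hlt
  have hint : ∀ e ∈ incident v, e ≠ e₀ → flow X e = 0 ∨ flow X e = 1 := fun e he hne =>
    eq_zero_or_one_of_mem_Icc_of_notMem_Ioo (hX.1 e) fun h => hne <|
      Finset.card_le_one.1 (Nat.le_of_lt_succ hlt) e (Finset.mem_filter.2 ⟨he, h⟩) e₀
        (Finset.mem_filter.2 ⟨he₀, hfrac⟩)
  simp only [incident, Finset.mem_insert, Finset.mem_singleton, forall_eq_or_imp, forall_eq]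
    at he₀ hint
  obtain ⟨hw, he, hn, hs⟩ := hint
  have hwe : west v ≠ east v := by simp [west, east, Fin.ext_iff]
  have hns : north v ≠ south v := by simp [north, south, Fin.ext_iff]
  have hdiv := divergence_flow X v
  rw [divergence_apply] at hdiv
  rcases he₀ with rfl | rfl | rfl | rfl
  · exact notMem_Ioo_of_add_eq_add (by linarith) (hs Sum.inr_ne_inl) (he hwe.symm)
      (hn Sum.inr_ne_inl) hfrac
  · exact notMem_Ioo_of_add_eq_add (by linarith) (hn Sum.inr_ne_inl) (hw hwe)
      (hs Sum.inr_ne_inl) hfrac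
  · exact notMem_Ioo_of_add_eq_add (by linarith) (he Sum.inl_ne_inr) (hw Sum.inl_ne_inr)
      (hs hns.symm) hfrac
  · exact notMem_Ioo_of_add_eq_add (by linarith) (hw Sum.inl_ne_inr) (he Sum.inl_ne_inr)
      (hn hns) hfrac

lemma card_le_card_fractional (hX : X ∈ flowPolytope n) :
    (Finset.univ.filter fun v => ∃ e ∈ incident v, flow X e ∈ Set.Ioo 0 1).card ≤
      (Finset.univ.filter fun e => flow X e ∈ Set.Ioo 0 1).card := by
  set T := Finset.univ.filter fun v => ∃ e ∈ incident v, flow X e ∈ Set.Ioo 0 1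
  set deg := fun v => ((incident v).filter fun e => flow X e ∈ Set.Ioo 0 1).card
  have hsum : ∑ v, deg v = 2 * (Finset.univ.filter fun e => flow X e ∈ Set.Ioo 0 1).card := by
    simp only [deg, Finset.card_filter]
    exact sum_sum_incident fun e he => if_neg fun h => he (isInterior_of_flow_mem_Ioo hX h)
  have hT : 2 * T.card ≤ ∑ v, deg v := calc
    2 * T.card = ∑ _v ∈ T, 2 := by rw [Finset.sum_const, smul_eq_mul, mul_comm]
    _ ≤ ∑ v ∈ T, deg v :=
      Finset.sum_le_sum fun v hv => two_le_card_incident_fractional hX (Finset.mem_filter.1 hv).2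
    _ ≤ ∑ v, deg v := Finset.sum_le_sum_of_subset (Finset.subset_univ T)
  omega

/-- The fractional edges outnumber the grid vertices they meet, and the conservation laws at these
vertices have one linear dependency. -/
theorem exists_circulation (hX : X ∈ flowPolytope n) (hfrac : ∃ e, flow X e ∈ Set.Ioo 0 1) :
    ∃ val : Edge n → ℝ, val ≠ 0 ∧ (∀ e, flow X e ∉ Set.Ioo 0 1 → val e = 0) ∧
      ∀ v, divergence val v = 0 := by
  set Fr := Finset.univ.filter fun e => flow X e ∈ Set.Ioo 0 1
  set T := Finset.univ.filter fun v => ∃ e ∈ incident v, flow X e ∈ Set.Ioo 0 1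
  obtain ⟨e₀, he₀⟩ := hfrac
  obtain ⟨v₀, hv₀⟩ : ∃ v₀, e₀ ∈ incident v₀ := by
    rcases e₀ with ⟨i, k⟩ | ⟨k, j⟩
    · obtain ⟨j, rfl⟩ := Fin.exists_succ_eq.2 (isInterior_of_flow_mem_Ioo hX he₀).1
      exact ⟨(i, j), by simp [incident, east]⟩
    · obtain ⟨i, rfl⟩ := Fin.exists_succ_eq.2 (isInterior_of_flow_mem_Ioo hX he₀).1
      exact ⟨(i, j), by simp [incident, south]⟩
  have hv₀T : v₀ ∈ T := Finset.mem_filter.2 ⟨Finset.mem_univ _, e₀, hv₀, he₀⟩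
  let extend : (Fr → ℝ) →ₗ[ℝ] Edge n → ℝ := LinearMap.pi fun e =>
    if h : e ∈ Fr then LinearMap.proj (R := ℝ) (φ := fun _ : Fr => ℝ) ⟨e, h⟩ else 0
  let Ψ : (Fr → ℝ) →ₗ[ℝ] T.erase v₀ → ℝ :=
    LinearMap.funLeft ℝ ℝ (fun v : T.erase v₀ => v.1) ∘ₗ divergence ∘ₗ extend
  have hlt : Module.finrank ℝ (T.erase v₀ → ℝ) < Module.finrank ℝ (Fr → ℝ) := by
    simp only [Module.finrank_fintype_fun_eq_card, Fintype.card_coe,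
      Finset.card_erase_of_mem hv₀T]
    have h₁ : T.card ≤ Fr.card := card_le_card_fractional hX
    have h₂ : 0 < T.card := Finset.card_pos.2 ⟨v₀, hv₀T⟩
    omega
  obtain ⟨f, hf, hf0⟩ :=
    Submodule.exists_mem_ne_zero_of_ne_bot (LinearMap.ker_ne_bot_of_finrank_lt (f := Ψ) hlt)
  have hsupp : ∀ e, e ∉ Fr → extend f e = 0 := fun e he => by simp [extend, he]
  have hzero : ∀ v ≠ v₀, divergence (extend f) v = 0 := by
    intro v hv
    by_cases hvT : v ∈ T
    · exact congrFun (LinearMap.mem_ker.1 hf) ⟨v, Finset.mem_erase.2 ⟨hv, hvT⟩⟩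
    · rw [divergence_congr (val' := 0) fun e he => hsupp e fun heF =>
        hvT (Finset.mem_filter.2 ⟨Finset.mem_univ _, e, he, (Finset.mem_filter.1 heF).2⟩),
        map_zero, Pi.zero_apply]
  refine ⟨extend f, fun h => hf0 (funext fun e => by simpa [extend] using congrFun h e),
    fun e he => hsupp e fun h => he (Finset.mem_filter.1 h).2, fun v => ?_⟩
  rcases eq_or_ne v v₀ with rfl | hv
  · rw [← sum_divergence fun e he => hsupp e fun h =>
      he (isInterior_of_flow_mem_Ioo hX (Finset.mem_filter.1 h).2)]
    exact (Finset.sum_eq_single v (fun w _ hw => hzero w hw) (by simp)).symm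
  · exact hzero v hv

end Integrality

lemma extremePoints_flowPolytope_subset :
    (flowPolytope n).extremePoints ℝ ⊆ {A | IsASM A} := by
  intro X hX
  obtain ⟨hXP, hext⟩ := mem_extremePoints.1 hX
  refine isASM_iff.2 ⟨fun e => ?_, hXP.2.1, hXP.2.2⟩
  by_contra h01
  have hfrac : flow X e ∈ Set.Ioo 0 1 := by
    by_contra h
    exact h01 (eq_zero_or_one_of_mem_Icc_of_notMem_Ioo (hXP.1 e) h)
  obtain ⟨val, hval, hsupp, hdiv⟩ := exists_circulation hXP ⟨e, hfrac⟩
  have hY : flow (ofFlow val) = val :=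
    flow_ofFlow (fun i => hsupp _ (by simp)) (fun j => hsupp _ (by simp)) hdiv
  have hadd := eventually_add_smul_mem_flowPolytope hXP (Y := ofFlow val) (by rwa [hY])
  have hsub := eventually_add_smul_mem_flowPolytope hXP (Y := -ofFlow val)
    (by simpa [hY] using hsupp)
  obtain ⟨t, ht, htadd, htsub⟩ := (hadd.and hsub).exists_gt
  have hmid : X ∈ openSegment ℝ (X + t • ofFlow val) (X + t • -ofFlow val) :=
    ⟨1 / 2, 1 / 2, by norm_num, by norm_num, by norm_num, by module⟩
  apply hval
  rw [← hY, (smul_eq_zero.1 (add_eq_left.1 (hext _ htadd _ htsub hmid).1)).resolve_left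
    (ne_of_gt ht), map_zero]

theorem flowPolytope_subset_ASMPolytope : flowPolytope n ⊆ ASMPolytope n := by
  rw [← closure_convexHull_extremePoints isCompact_flowPolytope convex_flowPolytope]
  exact closure_minimal (convexHull_mono extremePoints_flowPolytope_subset)
    (finite_setOf_isASM.isCompact_convexHull ℝ).isClosed

section Faces

variable {F : Set (Matrix (Fin n) (Fin n) ℝ)}

lemma subset_convexHull_faceASMs (hF : IsFaceOf F (ASMPolytope n)) :
    F ⊆ convexHull ℝ (faceASMs F) := by
  have h := IsExtreme.subset_convexHull_inter (S := {A | IsASM A}) hF.1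
  rwa [Set.inter_comm] at h

lemma flow_mem_Icc_of_mem_face (hF : IsFaceOf F (ASMPolytope n))
    {x : Matrix (Fin n) (Fin n) ℝ} (hx : x ∈ F) (e : Edge n) : flow x e ∈ Set.Icc 0 1 :=
  (ASMPolytope_subset_flowPolytope (hF.1.subset hx)).1 e

lemma isFaceOf_setOf_flow_eq (hF : IsFaceOf F (ASMPolytope n)) (e : Edge n) {s : ℝ}
    (hs : s = 0 ∨ s = 1) : IsFaceOf {x ∈ F | flow x e = s} F := by
  refine ⟨?_, hF.2.inter ((convex_singleton s).linear_preimage (LinearMap.proj e ∘ₗ flow))⟩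
  rcases hs with rfl | rfl
  · simpa using isExtreme_setOf_eq_of_forall_le (-(LinearMap.proj e ∘ₗ flow)) (c := 0)
      fun x hx => by simpa using (flow_mem_Icc_of_mem_face hF hx e).1
  · exact isExtreme_setOf_eq_of_forall_le (LinearMap.proj e ∘ₗ flow)
      fun x hx => (flow_mem_Icc_of_mem_face hF hx e).2

end Faces

/-- The edge `e` is doubly directed in the flow grid of `X`, i.e. an edge of `G(X)`. -/
def Active (X : Set (Matrix (Fin n) (Fin n) ℝ)) (e : Edge n) : Prop :=
  ∃ C ∈ X, ∃ D ∈ X, flow C e ≠ flow D e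

section Active

variable {X : Set (Matrix (Fin n) (Fin n) ℝ)} {A C D : Matrix (Fin n) (Fin n) ℝ} {e : Edge n}

lemma active_iff_exists_ne (hA : A ∈ X) : Active X e ↔ ∃ C ∈ X, flow C e ≠ flow A e := by
  refine ⟨fun ⟨C, hC, D, hD, h⟩ => ?_, fun ⟨C, hC, h⟩ => ⟨C, hC, A, hA, h⟩⟩
  by_cases hCA : flow C e = flow A e
  · exact ⟨D, hD, fun hDA => h (hCA.trans hDA.symm)⟩
  · exact ⟨C, hC, hCA⟩

lemma flow_eq_of_not_active (he : ¬ Active X e) (hC : C ∈ X) (hD : D ∈ X) :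
    flow C e = flow D e :=
  not_not.1 fun h => he ⟨C, hC, D, hD, h⟩

lemma Active.isInterior (hX : ∀ C ∈ X, IsASM C) (he : Active X e) : IsInterior e := by
  obtain ⟨C, hC, D, hD, hne⟩ := he
  rcases e with ⟨i, k⟩ | ⟨k, j⟩ <;> refine ⟨?_, ?_⟩ <;> rintro rfl <;> apply hne
  · simp
  · simp [(hX C hC).2.2.2.1 i, (hX D hD).2.2.2.1 i]
  · simp
  · simp [(hX C hC).2.2.2.2 j, (hX D hD).2.2.2.2 j]

lemma exists_mem_convexHull_flow_mem_Ioo (hXfin : X.Finite) (hX : ∀ C ∈ X, IsASM C)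
    (hA : A ∈ X) : ∃ x ∈ convexHull ℝ X, ∀ e,
      (Active X e → flow x e ∈ Set.Ioo 0 1) ∧ (¬ Active X e → flow x e = flow A e) := by
  set S := hXfin.toFinset
  have hS : ∀ C, C ∈ S ↔ C ∈ X := fun C => hXfin.mem_toFinset
  have hN : (0 : ℝ) < S.card := by exact_mod_cast Finset.card_pos.2 ⟨A, (hS A).2 hA⟩
  refine ⟨∑ C ∈ S, (S.card : ℝ)⁻¹ • C, (convex_convexHull ℝ X).sum_mem
    (fun _ _ => by positivity) (by simp [hN.ne']) fun C hC => subset_convexHull ℝ X ((hS C).1 hC),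
    fun e => ⟨fun he => ?_, fun he => ?_⟩⟩ <;>
  simp only [map_sum, map_smul, Finset.sum_apply, Pi.smul_apply, smul_eq_mul, ← Finset.mul_sum]
  · obtain ⟨C₀, hC₀, h₀, C₁, hC₁, h₁⟩ :
        ∃ C₀ ∈ X, flow C₀ e = 0 ∧ ∃ C₁ ∈ X, flow C₁ e = 1 := by
      obtain ⟨C, hC, D, hD, hne⟩ := he
      rcases (hX C hC).flow_eq_zero_or_one e with h | h <;>
        rcases (hX D hD).flow_eq_zero_or_one e with h' | h'
      exacts [absurd (h.trans h'.symm) hne, ⟨C, hC, h, D, hD, h'⟩, ⟨D, hD, h', C, hC, h⟩,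
        absurd (h.trans h'.symm) hne]
    have hbound (C : Matrix (Fin n) (Fin n) ℝ) (hC : C ∈ S) : flow C e ∈ Set.Icc 0 1 :=
      ((hX C ((hS C).1 hC)).mem_flowPolytope).1 e
    have hpos : 0 < ∑ C ∈ S, flow C e :=
      Finset.sum_pos' (fun C hC => (hbound C hC).1) ⟨C₁, (hS C₁).2 hC₁, by simp [h₁]⟩
    have hlt : ∑ C ∈ S, flow C e < S.card := by
      have : 0 < ∑ C ∈ S, (1 - flow C e) :=
        Finset.sum_pos' (fun C hC => sub_nonneg.2 (hbound C hC).2)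
          ⟨C₀, (hS C₀).2 hC₀, by simp [h₀]⟩
      simpa [Finset.sum_sub_distrib] using this
    exact ⟨mul_pos (inv_pos.2 hN) hpos, by rwa [inv_mul_lt_iff₀ hN, mul_one]⟩
  · rw [Finset.sum_congr rfl fun C hC => flow_eq_of_not_active he ((hS C).1 hC) hA,
      Finset.sum_const, nsmul_eq_mul, ← mul_assoc, inv_mul_cancel₀ hN.ne', one_mul]

lemma even_card_incident_flow_ne (hA : IsASM A) (hC : IsASM C) (v : Fin n × Fin n) :
    Even ((incident v).filter fun e => flow A e ≠ flow C e).card := by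
  have hdA := divergence_flow A v
  have hdC := divergence_flow C v
  rw [divergence_apply] at hdA hdC
  rw [Finset.card_filter, sum_incident]
  exact even_of_conservation (by linarith) (by linarith) (hA.flow_eq_zero_or_one _)
    (hA.flow_eq_zero_or_one _) (hA.flow_eq_zero_or_one _) (hA.flow_eq_zero_or_one _)
    (hC.flow_eq_zero_or_one _) (hC.flow_eq_zero_or_one _) (hC.flow_eq_zero_or_one _)
    (hC.flow_eq_zero_or_one _)

end Active

noncomputable def reversedFlow (X : Set (Matrix (Fin n) (Fin n) ℝ))
    (A : Matrix (Fin n) (Fin n) ℝ) (e : Edge n) : ℝ :=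
  if Active X e then 1 - flow A e else flow A e

noncomputable def reversal (X : Set (Matrix (Fin n) (Fin n) ℝ)) (A : Matrix (Fin n) (Fin n) ℝ) :
    Matrix (Fin n) (Fin n) ℝ :=
  ofFlow (reversedFlow X A)

section Reversal

variable {X : Set (Matrix (Fin n) (Fin n) ℝ)} {A C : Matrix (Fin n) (Fin n) ℝ}

/-- With `0`, `2` or `4` doubly directed edges at `v`: in the first two cases some member of `X`
differs from `A` exactly on them (by parity), in the last one all four edges are reversed. -/
lemma divergence_reversedFlow (hX : ∀ C ∈ X, IsASM C) (hA : A ∈ X) {v : Fin n × Fin n}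
    (hv : Even ((incident v).filter (Active X)).card) : divergence (reversedFlow X A) v = 0 := by
  set S := (incident v).filter (Active X)
  have of_eq_on (C : Matrix (Fin n) (Fin n) ℝ) (hC : C ∈ X)
      (hCA : ∀ e ∈ S, flow C e ≠ flow A e) : divergence (reversedFlow X A) v = 0 := by
    rw [divergence_congr (val' := flow C) fun e he => ?_, divergence_flow]
    unfold reversedFlow
    split_ifs with hact
    · exact (eq_one_sub_of_ne ((hX C hC).flow_eq_zero_or_one e)
        ((hX A hA).flow_eq_zero_or_one e) (hCA e (Finset.mem_filter.2 ⟨he, hact⟩))).symm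
    · exact flow_eq_of_not_active hact hA hC
  obtain ⟨r, hr⟩ := hv
  have hS4 : S.card ≤ 4 := (Finset.card_filter_le _ _).trans Finset.card_le_four
  obtain h0 | h2 | h4 : S.card = 0 ∨ S.card = 2 ∨ S.card = 4 := by omega
  · exact of_eq_on A hA fun e he => absurd he (Finset.card_eq_zero.1 h0 ▸ Finset.notMem_empty e)
  · obtain ⟨e₀, he₀⟩ := Finset.card_pos.1 (h2 ▸ two_pos)
    obtain ⟨C, hC, hCA⟩ := (active_iff_exists_ne hA).1 (Finset.mem_filter.1 he₀).2
    obtain ⟨r', hr'⟩ := even_card_incident_flow_ne (hX C hC) (hX A hA) v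
    set D := (incident v).filter fun e => flow C e ≠ flow A e
    have hDS : D ⊆ S := fun e he => by
      rw [Finset.mem_filter] at he ⊢
      exact ⟨he.1, C, hC, A, hA, he.2⟩
    have hD : 0 < D.card :=
      Finset.card_pos.2 ⟨e₀, Finset.mem_filter.2 ⟨(Finset.mem_filter.1 he₀).1, hCA⟩⟩
    have hDS' : D = S := Finset.eq_of_subset_of_card_le hDS (by omega)
    refine of_eq_on C hC fun e he => ?_
    rw [← hDS'] at he
    exact (Finset.mem_filter.1 he).2
  · have hall : ∀ e ∈ incident v, Active X e := Finset.filter_eq_self.1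
      (Finset.eq_of_subset_of_card_le (Finset.filter_subset _ _) (h4 ▸ Finset.card_le_four))
    have hdA := divergence_flow A v
    rw [divergence_congr (val := reversedFlow X A) (val' := fun e => 1 - flow A e)
      fun e he => if_pos (hall e he), divergence_apply]
    rw [divergence_apply] at hdA
    linarith

lemma flow_reversal (hX : ∀ C ∈ X, IsASM C) (hA : A ∈ X)
    (hev : ∀ v, Even ((incident v).filter (Active X)).card) :
    flow (reversal X A) = reversedFlow X A := by
  refine flow_ofFlow (fun i => ?_) (fun j => ?_) fun v => divergence_reversedFlow hX hA (hev v)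
  · rw [reversedFlow, if_neg fun h => (h.isInterior hX).1 rfl]
    simp
  · rw [reversedFlow, if_neg fun h => (h.isInterior hX).1 rfl]
    simp

lemma isASM_reversal (hX : ∀ C ∈ X, IsASM C) (hA : A ∈ X)
    (hev : ∀ v, Even ((incident v).filter (Active X)).card) : IsASM (reversal X A) := by
  have hA' := hX A hA
  refine isASM_iff.2 ⟨fun e => ?_, fun i => ?_, fun j => ?_⟩
  · rw [flow_reversal hX hA hev, reversedFlow]
    split_ifs
    · rcases hA'.flow_eq_zero_or_one e with h | h <;> simp [h]
    · exact hA'.flow_eq_zero_or_one e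
  · rw [← flow_inl_last, flow_reversal hX hA hev, reversedFlow,
      if_neg fun h => (h.isInterior hX).2 rfl, flow_inl_last]
    exact hA'.2.2.2.1 i
  · rw [← flow_inr_last, flow_reversal hX hA hev, reversedFlow,
      if_neg fun h => (h.isInterior hX).2 rfl, flow_inr_last]
    exact hA'.2.2.2.2 j

/-- The face is centrally symmetric, `reversal` being the symmetry. -/
lemma add_reversal (hX : ∀ C ∈ X, IsASM C)
    (hev : ∀ v, Even ((incident v).filter (Active X)).card) (hA : A ∈ X) (hC : C ∈ X) :
    A + reversal X A = C + reversal X C := by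
  apply flow_injective
  ext e
  simp only [map_add, Pi.add_apply, flow_reversal hX hA hev, flow_reversal hX hC hev, reversedFlow]
  split_ifs with he
  · ring
  · rw [flow_eq_of_not_active he hA hC]

end Reversal

section Estranged

variable {F : Set (Matrix (Fin n) (Fin n) ℝ)} {A B D : Matrix (Fin n) (Fin n) ℝ}

/-- Perturbing the barycenter of the vertices of `F` away from `D` stays in the polytope, as the
barycenter is fractional on every doubly directed edge. -/
lemma mem_face_of_flow_eq_of_not_active (hF : IsFaceOf F (ASMPolytope n))
    (hA : A ∈ faceASMs F) (hD : IsASM D)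
    (hDA : ∀ e, ¬ Active (faceASMs F) e → flow D e = flow A e) : D ∈ F := by
  obtain ⟨x, hx, hxe⟩ := exists_mem_convexHull_flow_mem_Ioo
    (finite_setOf_isASM.subset fun C hC => hC.2) (fun C hC => hC.2) hA
  have hxF : x ∈ F := convexHull_min (fun C hC => hC.1) hF.2 hx
  have hev := eventually_add_smul_mem_flowPolytope
    (ASMPolytope_subset_flowPolytope (hF.1.subset hxF)) (Y := x - D) fun e he => by
      by_cases hact : Active (faceASMs F) e
      · exact absurd ((hxe e).1 hact) he
      · simp [(hxe e).2 hact, hDA e hact]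
  obtain ⟨t, ht, hxt⟩ := hev.exists_gt
  exact hF.1.mem_of_add_smul_sub_mem hxF (subset_convexHull ℝ _ hD) ht
    (flowPolytope_subset_ASMPolytope hxt)

lemma flow_ne_of_estranged (hF : IsFaceOf F (ASMPolytope n)) (hA : A ∈ faceASMs F)
    (hB : B ∈ faceASMs F) (hAB : Estranged F A B) {e : Edge n} (he : Active (faceASMs F) e) :
    flow A e ≠ flow B e := by
  intro hflow
  obtain ⟨C, hC, hCA⟩ := (active_iff_exists_ne hA).1 he
  refine hAB _ (isFaceOf_setOf_flow_eq hF e (hA.2.flow_eq_zero_or_one e)) (fun h => hCA ?_)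
    ⟨⟨hA.1, rfl⟩, hB.1, hflow.symm⟩
  have : C ∈ {x ∈ F | flow x e = flow A e} := by
    rw [h]
    exact hC.1
  exact this.2

lemma flow_eq_reversedFlow_of_estranged (hF : IsFaceOf F (ASMPolytope n))
    (hA : A ∈ faceASMs F) (hB : B ∈ faceASMs F) (hAB : Estranged F A B) :
    flow B = reversedFlow (faceASMs F) A := by
  ext e
  rw [reversedFlow]
  split_ifs with he
  · exact eq_one_sub_of_ne (hB.2.flow_eq_zero_or_one e) (hA.2.flow_eq_zero_or_one e)
      (flow_ne_of_estranged hF hA hB hAB he).symm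
  · exact flow_eq_of_not_active he hB hA

lemma even_card_active_of_estranged (hF : IsFaceOf F (ASMPolytope n)) (hA : A ∈ faceASMs F)
    (hB : B ∈ faceASMs F) (hAB : Estranged F A B) (v : Fin n × Fin n) :
    Even ((incident v).filter (Active (faceASMs F))).card := by
  rw [Finset.filter_congr fun e _ => ⟨flow_ne_of_estranged hF hA hB hAB,
    fun h => ⟨A, hA, B, hB, h⟩⟩]
  exact even_card_incident_flow_ne hA.2 hB.2 v

lemma reversal_mem_faceASMs (hF : IsFaceOf F (ASMPolytope n))
    (hev : ∀ v, Even ((incident v).filter (Active (faceASMs F))).card) (hA : A ∈ faceASMs F) :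
    reversal (faceASMs F) A ∈ faceASMs F := by
  have hB := isASM_reversal (fun C hC => hC.2) hA hev
  refine ⟨mem_face_of_flow_eq_of_not_active hF hA hB fun e he => ?_, hB⟩
  rw [flow_reversal (fun C hC => hC.2) hA hev, reversedFlow, if_neg he]

/-- A face `G` of `F` through `A` and its reversal contains their common midpoint, which is also
the midpoint of every vertex `C` of `F` and its reversal; so `G` contains all vertices of `F`. -/
lemma estranged_reversal (hF : IsFaceOf F (ASMPolytope n))
    (hev : ∀ v, Even ((incident v).filter (Active (faceASMs F))).card) (hA : A ∈ faceASMs F) :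
    Estranged F A (reversal (faceASMs F) A) := by
  rintro G hG hGF ⟨hAG, hBG⟩
  refine hGF (hG.1.subset.antisymm fun x hx => ?_)
  have hmid : (1 / 2 : ℝ) • A + (1 / 2 : ℝ) • reversal (faceASMs F) A ∈ G :=
    hG.2 hAG hBG (by norm_num) (by norm_num) (by norm_num)
  have hV : faceASMs F ⊆ G := fun C hC => by
    rw [← smul_add, add_reversal (fun C hC => hC.2) hev hA hC, smul_add] at hmid
    exact hG.1.left_mem_of_mem_openSegment hC.1 (reversal_mem_faceASMs hF hev hC).1 hmid
      ⟨1 / 2, 1 / 2, by norm_num, by norm_num, by norm_num, rfl⟩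
  exact convexHull_min hV hG.2 (subset_convexHull_faceASMs hF hx)

end Estranged

section Degree

open SimpleGraph

def gridEdge (v w : Fin n × Fin n) : Edge n :=
  if v.1 = w.1 then east (v.1, min v.2 w.2) else south (min v.1 w.1, v.2)

lemma gridEdge_mem_incident {v w : Fin n × Fin n} (h : (pathGraph n □ pathGraph n).Adj v w) :
    gridEdge v w ∈ incident v := by
  rw [boxProd_adj, pathGraph_adj, pathGraph_adj] at h
  simp only [gridEdge, incident, east, west, north, south, Finset.mem_insert,
    Finset.mem_singleton, Fin.ext_iff] at h ⊢
  split_ifs with h1 <;> simp [Fin.ext_iff, Fin.coe_min] at h1 ⊢ <;> omega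

lemma eq_of_gridEdge_eq {v w w' : Fin n × Fin n} (hw : (pathGraph n □ pathGraph n).Adj v w)
    (hw' : (pathGraph n □ pathGraph n).Adj v w') (h : gridEdge v w = gridEdge v w') : w = w' := by
  rw [boxProd_adj, pathGraph_adj, pathGraph_adj] at hw hw'
  simp only [gridEdge, east, south] at h
  split_ifs at h <;> simp [Prod.ext_iff, Fin.ext_iff, Fin.coe_min] at h hw hw' ⊢ <;> omega

lemma exists_gridEdge_eq {v : Fin n × Fin n} {e : Edge n} (he : e ∈ incident v)
    (hint : IsInterior e) : ∃ w, (pathGraph n □ pathGraph n).Adj v w ∧ gridEdge v w = e := by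
  simp only [incident, Finset.mem_insert, Finset.mem_singleton] at he
  rcases he with rfl | rfl | rfl | rfl <;>
    simp only [west, east, north, south, IsInterior, ne_eq, Fin.ext_iff, Fin.val_castSucc,
      Fin.val_succ, Fin.val_zero, Fin.val_last] at hint
  · refine ⟨(v.1, ⟨v.2 - 1, by omega⟩), by simp [boxProd_adj, pathGraph_adj]; omega, ?_⟩
    rw [gridEdge, if_pos rfl]
    simp [east, west, Fin.ext_iff, Fin.coe_min]
    omega
  · refine ⟨(v.1, ⟨v.2 + 1, by omega⟩), by simp [boxProd_adj, pathGraph_adj], ?_⟩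
    rw [gridEdge, if_pos rfl]
    simp [east, Fin.ext_iff, Fin.coe_min]
  · refine ⟨(⟨v.1 - 1, by omega⟩, v.2), by simp [boxProd_adj, pathGraph_adj]; omega, ?_⟩
    rw [gridEdge, if_neg (by simp [Fin.ext_iff]; omega)]
    simp [south, north, Fin.ext_iff, Fin.coe_min]
    omega
  · refine ⟨(⟨v.1 + 1, by omega⟩, v.2), by simp [boxProd_adj, pathGraph_adj], ?_⟩
    rw [gridEdge, if_neg (by simp [Fin.ext_iff])]
    simp [south, Fin.ext_iff, Fin.coe_min]

lemma ddGraph_adj_iff {X : Set (Matrix (Fin n) (Fin n) ℝ)} {v w : Fin n × Fin n} :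
    (ddGraph X).Adj v w ↔ (pathGraph n □ pathGraph n).Adj v w ∧ Active X (gridEdge v w) := by
  have hrow (i j : Fin n) : Active X (east (i, j)) ↔
      ∃ A ∈ X, ∃ B ∈ X, rowPartial A i j ≠ rowPartial B i j := by
    simp only [Active, flow_east]
  have hcol (i j : Fin n) : Active X (south (i, j)) ↔
      ∃ A ∈ X, ∃ B ∈ X, colPartial A i j ≠ colPartial B i j := by
    simp only [Active, flow_south]
  have hne (h : (v.1 : ℕ) + 1 = w.1 ∨ (w.1 : ℕ) + 1 = v.1) : v.1 ≠ w.1 := fun h' => by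
    rw [h'] at h
    omega
  simp only [ddGraph, ← hrow, ← hcol, boxProd_adj, pathGraph_adj]
  constructor
  · rintro (⟨h1, h2, h3⟩ | ⟨h1, h2, h3⟩)
    · exact ⟨Or.inr ⟨h2, h1⟩, by rwa [gridEdge, if_pos h1]⟩
    · exact ⟨Or.inl ⟨h2, h1⟩, by rwa [gridEdge, if_neg (hne h2)]⟩
  · rintro ⟨⟨h2, h1⟩ | ⟨h2, h1⟩, h3⟩
    · rw [gridEdge, if_neg (hne h2)] at h3
      exact Or.inr ⟨h1, h2, h3⟩
    · rw [gridEdge, if_pos h1] at h3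
      exact Or.inl ⟨h1, h2, h3⟩

lemma ddDegree_eq_card {X : Set (Matrix (Fin n) (Fin n) ℝ)} (hX : ∀ C ∈ X, IsASM C)
    (v : Fin n × Fin n) : ddDegree X v = ((incident v).filter (Active X)).card := by
  rw [ddDegree, ← Set.ncard_coe_finset]
  refine Set.ncard_congr (fun w _ => gridEdge v w) (fun w hw => ?_) (fun w w' hw hw' h => ?_)
    fun e he => ?_
  · rw [mem_neighborSet, ddGraph_adj_iff] at hw
    exact Finset.mem_filter.2 ⟨gridEdge_mem_incident hw.1, hw.2⟩
  · rw [mem_neighborSet, ddGraph_adj_iff] at hw hw'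
    exact eq_of_gridEdge_eq hw.1 hw'.1 h
  · obtain ⟨he, hact⟩ := Finset.mem_filter.1 he
    obtain ⟨w, hw, rfl⟩ := exists_gridEdge_eq he (hact.isInterior hX)
    exact ⟨w, ddGraph_adj_iff.2 ⟨hw, hact⟩, rfl⟩

end Degree

/-- if all vertices of `G(F)` have even degree, every vertex `A` of the
face `F` has a unique estranged partner `B`, obtained by reversing in the simple flow
grid of `A` precisely the arcs corresponding to edges of `G(F)`; if `G(F)` has a
vertex of odd degree, no two vertices of `F` are estranged in `F`. -/
theorem estranged_dichotomy (n : ℕ) (F : Set (Matrix (Fin n) (Fin n) ℝ))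
    (hF : IsFaceOf F (ASMPolytope n)) :
    ((∀ v, Even (ddDegree (faceASMs F) v)) →
      ∀ A ∈ faceASMs F,
        (∃! B, B ∈ faceASMs F ∧ Estranged F A B) ∧
        (∀ B, B ∈ faceASMs F → Estranged F A B →
          (∀ i j : Fin n,
            rowPartial B i j =
              if ∃ C ∈ faceASMs F, rowPartial C i j ≠ rowPartial A i j then
                1 - rowPartial A i j
              else rowPartial A i j) ∧
          (∀ i j : Fin n,
            colPartial B i j =
              if ∃ C ∈ faceASMs F, colPartial C i j ≠ colPartial A i j then
                1 - colPartial A i j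
              else colPartial A i j))) ∧
    ((∃ v, ¬ Even (ddDegree (faceASMs F) v)) →
      ∀ A ∈ faceASMs F, ∀ B ∈ faceASMs F, ¬ Estranged F A B) := by
  have hV : ∀ C ∈ faceASMs F, IsASM C := fun C hC => hC.2
  refine ⟨fun hEven A hA => ?_, fun ⟨v, hv⟩ A hA B hB hAB => hv ?_⟩
  · have hev (v : Fin n × Fin n) : Even ((incident v).filter (Active (faceASMs F))).card :=
      ddDegree_eq_card hV v ▸ hEven v
    have hflow {B} (hB : B ∈ faceASMs F) (hAB : Estranged F A B) :=
      flow_eq_reversedFlow_of_estranged hF hA hB hAB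
    refine ⟨⟨reversal _ A, ⟨reversal_mem_faceASMs hF hev hA, estranged_reversal hF hev hA⟩,
      fun B ⟨hB, hAB⟩ => flow_injective ((hflow hB hAB).trans (flow_reversal hV hA hev).symm)⟩,
      fun B hB hAB => ⟨fun i j => ?_, fun i j => ?_⟩⟩
    · simpa [reversedFlow, flow_east, active_iff_exists_ne hA] using
        congrFun (hflow hB hAB) (east (i, j))
    · simpa [reversedFlow, flow_south, active_iff_exists_ne hA] using
        congrFun (hflow hB hAB) (south (i, j))
  · rw [ddDegree_eq_card hV]
    exact even_card_active_of_estranged hF hA hB hAB v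

end ASMPaper
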